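/- arXiv:2303.11918 — 4 statements merged into one kernel-verified Lean document; each statement's English description precedes it below -/
import Mathlib

section
/- In B_3, for every integer i and every natural number n, τ_i * δ^n = δ^n * τ_{i+n}, where δ = ba and τ is determined by the index mod 3 (τ_i = a, b, x for i ≡ 1, 2, 0 mod 3, with x = a⁻¹ba). -/
def B3rels : Set (FreeGroup (Fin 2)) :=
  {FreeGroup.of 0 * FreeGroup.of 1 * FreeGroup.of 0 *
    (FreeGroup.of 1 * FreeGroup.of 0 * FreeGroup.of 1)⁻¹}

/-- The braid group on 3 strands, presented as ⟨a, b | aba = bab⟩. -/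
abbrev B3 := PresentedGroup B3rels

def a : B3 := PresentedGroup.of 0
def b : B3 := PresentedGroup.of 1
def x : B3 := a⁻¹ * b * a
def δ : B3 := b * a
def Δ : B3 := a * b * a

/-- τ_i = a, b, x according to i ≡ 1, 2, 0 (mod 3). -/
def τ (i : ℤ) : B3 := if i % 3 = 1 then a else if i % 3 = 2 then b else x

theorem mul_pow_eq_pow_mul_of_mul_eq_mul {M : Type*} [Monoid M] (f : ℤ → M) (d : M)
    (h : ∀ i, f i * d = d * f (i + 1)) (i : ℤ) (n : ℕ) :
    f i * d ^ n = d ^ n * f (i + n) := by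
  induction n with
  | zero => simp
  | succ n ih =>
    rw [pow_succ, ← mul_assoc, ih, mul_assoc, h, ← mul_assoc, ← pow_succ, Nat.cast_succ,
      add_assoc]

theorem a_mul_b_mul_a : a * b * a = b * a * b := by
  have h : PresentedGroup.mk B3rels
      (FreeGroup.of 0 * FreeGroup.of 1 * FreeGroup.of 0 *
        (FreeGroup.of 1 * FreeGroup.of 0 * FreeGroup.of 1)⁻¹) = 1 :=
    (QuotientGroup.eq_one_iff _).2 (Subgroup.subset_normalClosure rfl)
  rw [map_mul, map_inv, mul_inv_eq_one] at h
  exact h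

theorem a_mul_δ : a * δ = δ * b := by
  rw [δ, ← mul_assoc, a_mul_b_mul_a]

theorem b_mul_δ : b * δ = δ * x := by
  simp only [δ, x]
  group

theorem x_mul_δ : x * δ = δ * a := by
  calc x * δ = a⁻¹ * (b * a * b) * a := by simp only [x, δ]; group
    _ = δ * a := by rw [← a_mul_b_mul_a, δ]; group

theorem τ_mul_δ (i : ℤ) : τ i * δ = δ * τ (i + 1) := by
  rcases (by omega : i % 3 = 0 ∨ i % 3 = 1 ∨ i % 3 = 2) with h | h | h
  · simpa [τ, h, show (i + 1) % 3 = 1 by omega] using x_mul_δ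
  · simpa [τ, h, show (i + 1) % 3 = 2 by omega] using a_mul_δ
  · simpa [τ, h, show (i + 1) % 3 = 0 by omega] using b_mul_δ

theorem tau_mul_delta_pow : ∀ (i : ℤ) (n : ℕ), τ i * δ ^ n = δ ^ n * τ (i + n) :=
  mul_pow_eq_pow_mul_of_mul_eq_mul τ δ τ_mul_δ
end

section
/- In B_3, the braid δ^n * τ_1^{u_1} * ⋯ * τ_t^{u_t} is conjugate to δ^n * τ_1^{u_2} * τ_2^{u_3} * ⋯ * τ_{t-1}^{u_t} * τ_{-n}^{u_1} whenever -n ≡ t (mod 3); i.e., cyclic permutation of the exponent tuple yields a conjugate braid when n + t ≡ 0 (mod 3). -/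
/-- The Xu word δ^n τ_1^{u 0} τ_2^{u 1} ⋯ τ_t^{u (t-1)}. -/
def xuWord (n : ℤ) (t : ℕ) (u : ℕ → ℕ) : B3 :=
  δ ^ n * ((List.range t).map (fun (i : ℕ) => τ ((i : ℤ) + 1) ^ u i)).prod

theorem isConj_mul_comm {G : Type*} [Group G] (g h : G) : IsConj (g * h) (h * g) :=
  isConj_iff.mpr ⟨h, by group⟩

theorem SemiconjBy.list_prod_map {M ι : Type*} [Monoid M] {g : M} {f f' : ι → M} {l : List ι}
    (h : ∀ i ∈ l, SemiconjBy g (f i) (f' i)) :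
    SemiconjBy g (l.map f).prod (l.map f').prod := by
  induction l with
  | nil => exact SemiconjBy.one_right g
  | cons i l ih =>
    simp only [List.map_cons, List.prod_cons]
    exact (h i List.mem_cons_self).mul_right (ih fun j hj => h j (List.mem_cons_of_mem i hj))

theorem semiconjBy_zpow_of_shift {G : Type*} [Group G] {g : G} {f : ℤ → G}
    (h : ∀ i, SemiconjBy g (f i) (f (i - 1))) (k i : ℤ) :
    SemiconjBy (g ^ k) (f i) (f (i - k)) := by
  induction k using Int.induction_on generalizing i with
  | zero => simp
  | succ k ih =>
    rw [zpow_add_one, show i - (k + 1) = i - 1 - k by ring]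
    exact (ih (i - 1)).mul_left (h i)
  | pred k ih =>
    rw [zpow_sub_one, show i - (-k - 1) = i + 1 - -k by ring]
    exact (ih (i + 1)).mul_left (SemiconjBy.inv_symm_left_iff.mpr (by simpa using h (i + 1)))

theorem semiconjBy_δ_τ (i : ℤ) : SemiconjBy δ (τ i) (τ (i - 1)) := by
  have hδa : δ * a = x * δ := by
    simp only [δ, x]
    calc b * a * a = a⁻¹ * (a * b * a) * a := by group
      _ = a⁻¹ * b * a * (b * a) := by rw [a_mul_b_mul_a]; group
  have hδb : δ * b = a * δ := by simp only [δ]; rw [← a_mul_b_mul_a]; group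
  have hδx : δ * x = b * δ := by simp only [δ, x]; group
  unfold SemiconjBy τ
  rcases (by omega : i % 3 = 0 ∨ i % 3 = 1 ∨ i % 3 = 2) with h | h | h
  · simpa [h, show (i - 1) % 3 = 2 by omega] using hδx
  · simpa [h, show (i - 1) % 3 = 0 by omega] using hδa
  · simpa [h, show (i - 1) % 3 = 1 by omega] using hδb

theorem τ_eq_of_emod_eq {i j : ℤ} (h : i % 3 = j % 3) : τ i = τ j := by
  simp only [τ, h]

theorem xuWord_succ (n : ℤ) (s : ℕ) (u : ℕ → ℕ) :
    xuWord n (s + 1) u =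
      δ ^ n * (τ 1 ^ u 0 * ((List.range s).map fun i : ℕ => τ ((i : ℤ) + 2) ^ u (i + 1)).prod) := by
  rw [xuWord, List.prod_range_succ']
  congr 3 with i

theorem xuWord_succ_rotate (n : ℤ) (s : ℕ) (u : ℕ → ℕ) :
    xuWord n (s + 1) (fun i => u ((i + 1) % (s + 1))) =
      δ ^ n * (((List.range s).map fun i : ℕ => τ ((i : ℤ) + 1) ^ u (i + 1)).prod *
        τ ((s : ℤ) + 1) ^ u 0) := by
  rw [xuWord, List.prod_range_succ, Nat.mod_self]
  congr 3
  refine List.map_congr_left fun i hi => ?_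
  rw [Nat.mod_eq_of_lt (by simpa using hi)]

theorem xuWord_cyclic_conjugate_general (n : ℤ) (t : ℕ) (u : ℕ → ℕ)
    (ht : 1 ≤ t) (h3 : (n + t) % 3 = 0) :
    ∃ g : B3, g * xuWord n t u * g⁻¹ = xuWord n t (fun i => u ((i + 1) % t)) := by
  obtain ⟨s, rfl⟩ : ∃ s, t = s + 1 := ⟨t - 1, by omega⟩
  set P := ((List.range s).map fun i : ℕ => τ ((i : ℤ) + 2) ^ u (i + 1)).prod
  set Q := ((List.range s).map fun i : ℕ => τ ((i : ℤ) + 1) ^ u (i + 1)).prod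
  have hPQ : SemiconjBy δ P Q := SemiconjBy.list_prod_map fun i _ => by
    simpa [add_sub_assoc] using (semiconjBy_δ_τ ((i : ℤ) + 2)).pow_right (u (i + 1))
  have hδ : SemiconjBy δ (δ ^ n * (τ 1 ^ u 0 * P)) (δ ^ n * (τ 0 ^ u 0 * Q)) :=
    SemiconjBy.mul_right (Commute.self_zpow δ n)
      (((semiconjBy_δ_τ 1).pow_right _).mul_right hPQ)
  have hδn : δ ^ n * τ 0 ^ u 0 = τ (-n) ^ u 0 * δ ^ n := by
    simpa using ((semiconjBy_zpow_of_shift semiconjBy_δ_τ n 0).pow_right (u 0)).eq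
  have hτ : τ (-n) = τ ((s : ℤ) + 1) := τ_eq_of_emod_eq (by push_cast at h3; omega)
  apply isConj_iff.mp
  rw [xuWord_succ, xuWord_succ_rotate]
  refine IsConj.trans ⟨toUnits δ, hδ⟩ ?_
  rw [← mul_assoc, hδn, mul_assoc, hτ, ← mul_assoc (δ ^ n)]
  exact isConj_mul_comm _ _

theorem xuWord_cyclic_conjugate (n : ℤ) (t : ℕ) (u : ℕ → ℕ)
    (ht : 1 ≤ t) (hu : ∀ i < t, 1 ≤ u i) (h3 : (n + t) % 3 = 0) :
    ∃ g : B3, g * xuWord n t u * g⁻¹ = xuWord n t (fun i => u ((i + 1) % t)) :=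
  xuWord_cyclic_conjugate_general n t u ht h3
end

section
/- In B_3, the reverse of δ^n τ_1^{u_1} τ_2^{u_2} ⋯ τ_t^{u_t} equals τ_{-t}^{u_t} ⋯ τ_{-1}^{u_1} δ^n, and this is conjugate to a word of the form δ^n τ_1^{v_1} ⋯ τ_t^{v_t} where (v_1,…,v_t) is a cyclic permutation of (u_t,…,u_1). In particular rev preserves n, t, and u_1 + ⋯ + u_t. -/
section Antihom

variable {G : Type*} [Group G] {f : G → G} (hf : ∀ p q, f (p * q) = f q * f p)
include hf

def toMulOppositeHom : G →* Gᵐᵒᵖ :=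
  MonoidHom.mk' (fun p => MulOpposite.op (f p)) fun p q => by simp [hf]

theorem map_inv_of_antihom (g : G) : f g⁻¹ = (f g)⁻¹ :=
  congrArg MulOpposite.unop (map_inv (toMulOppositeHom hf) g)

theorem map_zpow_of_antihom (g : G) (k : ℤ) : f (g ^ k) = f g ^ k :=
  congrArg MulOpposite.unop (map_zpow (toMulOppositeHom hf) g k)

theorem map_pow_of_antihom (g : G) (k : ℕ) : f (g ^ k) = f g ^ k :=
  congrArg MulOpposite.unop (map_pow (toMulOppositeHom hf) g k)

theorem map_list_prod_of_antihom (l : List G) : f l.prod = (l.map f).reverse.prod :=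
  unop_map_list_prod (toMulOppositeHom hf) l

end Antihom

theorem x_eq_b_mul_a_mul_b_inv : x = b * a * b⁻¹ := by
  rw [x, mul_assoc, inv_mul_eq_iff_eq_mul, ← mul_assoc, ← mul_assoc, a_mul_b_mul_a,
    mul_inv_cancel_right]

theorem τ_congr {i j : ℤ} (h : i ≡ j [ZMOD 3]) : τ i = τ j := by
  simp only [τ, Int.ModEq.eq h]

theorem τ_of_emod_eq_zero {i : ℤ} (h : i % 3 = 0) : τ i = x := by simp [τ, h]

theorem τ_of_emod_eq_one {i : ℤ} (h : i % 3 = 1) : τ i = a := by simp [τ, h]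

theorem τ_of_emod_eq_two {i : ℤ} (h : i % 3 = 2) : τ i = b := by simp [τ, h]

theorem conj_δ_τ (i : ℤ) : MulAut.conj δ (τ i) = τ (i + 2) := by
  rw [MulAut.conj_apply, mul_inv_eq_iff_eq_mul, δ]
  rcases (by omega : i % 3 = 0 ∨ i % 3 = 1 ∨ i % 3 = 2) with h | h | h
  · rw [τ_of_emod_eq_zero h, τ_of_emod_eq_two (by omega), x_eq_b_mul_a_mul_b_inv,
      show b * a * (b * a * b⁻¹) = b * (a * b * a) * b⁻¹ by group, a_mul_b_mul_a]
    group
  · rw [τ_of_emod_eq_one h, τ_of_emod_eq_zero (by omega), x_eq_b_mul_a_mul_b_inv]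
    group
  · rw [τ_of_emod_eq_two h, τ_of_emod_eq_one (by omega), ← mul_assoc, a_mul_b_mul_a]

theorem conj_δ_inv_τ (i : ℤ) : (MulAut.conj δ)⁻¹ (τ i) = τ (i - 2) := by
  rw [MulAut.inv_apply, MulEquiv.symm_apply_eq, conj_δ_τ, sub_add_cancel]

theorem conj_δ_zpow_τ (m i : ℤ) : MulAut.conj (δ ^ m) (τ i) = τ (i + 2 * m) := by
  induction m using Int.induction_on generalizing i with
  | zero => simp
  | succ k ih =>
    rw [zpow_add_one, map_mul, MulAut.mul_apply, conj_δ_τ, ih]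
    ring_nf
  | pred k ih =>
    rw [zpow_sub_one, map_mul, MulAut.mul_apply, map_inv, conj_δ_inv_τ, ih]
    ring_nf

theorem conj_δ_zpow_list_prod_τ_pow (m : ℤ) (l : List ℕ) (f : ℕ → ℤ) (e : ℕ → ℕ) :
    MulAut.conj (δ ^ m) (l.map fun i => τ (f i) ^ e i).prod =
      (l.map fun i => τ (f i + 2 * m) ^ e i).prod := by
  simp only [map_list_prod, List.map_map, Function.comp_def, map_pow, conj_δ_zpow_τ]

theorem conj_reverse_prod_τ_pow (t : ℕ) (u : ℕ → ℕ) :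
    MulAut.conj (δ ^ (-((t : ℤ) + 1)))
        ((List.range t).reverse.map fun (i : ℕ) => τ (-((i : ℤ) + 1)) ^ u i).prod =
      ((List.range t).map fun (j : ℕ) => τ ((j : ℤ) + 1) ^ u (t - 1 - j)).prod := by
  rw [conj_δ_zpow_list_prod_τ_pow, List.range_eq_range', List.reverse_range',
    ← List.range_eq_range', List.map_map]
  refine congrArg List.prod (List.map_congr_left fun j hj => ?_)
  have hjt : j < t := by simpa using hj
  simp only [Function.comp_apply, zero_add]
  -- the index is `-(t - j) - 2 (t + 1) = (j + 1) - 3 (t + 1)`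
  rw [τ_congr (j := (j : ℤ) + 1) (by rw [Int.ModEq]; omega)]

section Rev

variable {rev : B3 → B3} (hrev : ∀ p q : B3, rev (p * q) = rev q * rev p)
  (ha : rev a = b) (hb : rev b = a)
include hrev ha hb

theorem rev_δ : rev δ = δ := by rw [δ, hrev, ha, hb]

theorem rev_x : rev x = x := by
  conv_lhs => rw [x_eq_b_mul_a_mul_b_inv]
  rw [hrev, hrev, map_inv_of_antihom hrev, ha, hb, x, mul_assoc]

theorem rev_τ (i : ℤ) : rev (τ i) = τ (-i) := by
  rcases (by omega : i % 3 = 0 ∨ i % 3 = 1 ∨ i % 3 = 2) with h | h | h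
  · rw [τ_of_emod_eq_zero h, τ_of_emod_eq_zero (by omega), rev_x hrev ha hb]
  · rw [τ_of_emod_eq_one h, τ_of_emod_eq_two (by omega), ha]
  · rw [τ_of_emod_eq_two h, τ_of_emod_eq_one (by omega), hb]

theorem rev_xuWord_eq (n : ℤ) (t : ℕ) (u : ℕ → ℕ) :
    rev (xuWord n t u) =
      ((List.range t).reverse.map fun (i : ℕ) => τ (-((i : ℤ) + 1)) ^ u i).prod * δ ^ n := by
  rw [xuWord, hrev, map_zpow_of_antihom hrev, rev_δ hrev ha hb, map_list_prod_of_antihom hrev,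
    List.map_map, ← List.map_reverse]
  simp only [Function.comp_def, map_pow_of_antihom hrev, rev_τ hrev ha hb]

end Rev

theorem rev_xuWord_general (rev : B3 → B3)
    (hrev : ∀ p q : B3, rev (p * q) = rev q * rev p)
    (ha : rev a = b) (hb : rev b = a)
    (n : ℤ) (t : ℕ) (u : ℕ → ℕ) :
    rev (xuWord n t u) =
      ((List.range t).reverse.map (fun (i : ℕ) => τ (-((i : ℤ) + 1)) ^ u i)).prod * δ ^ n ∧
    ∃ (v : ℕ → ℕ) (k : ℕ),
      (∀ i < t, v i = u (t - 1 - ((i + k) % t))) ∧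
      ∃ g : B3, g * rev (xuWord n t u) * g⁻¹ = xuWord n t v := by
  have hrevw := rev_xuWord_eq hrev ha hb n t u
  refine ⟨hrevw, fun i => u (t - 1 - i), 0, fun i hi => by rw [Nat.add_zero, Nat.mod_eq_of_lt hi],
    δ ^ (n - (t + 1)), ?_⟩
  rw [hrevw, xuWord, ← conj_reverse_prod_τ_pow, MulAut.conj_apply]
  group

theorem rev_xuWord (rev : B3 → B3)
    (hrev : ∀ p q : B3, rev (p * q) = rev q * rev p)
    (ha : rev a = b) (hb : rev b = a)
    (n : ℤ) (t : ℕ) (u : ℕ → ℕ) (ht : 1 ≤ t) (hu : ∀ i < t, 1 ≤ u i)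
    (h3 : (n + t) % 3 = 0) :
    rev (xuWord n t u) =
      ((List.range t).reverse.map (fun (i : ℕ) => τ (-((i : ℤ) + 1)) ^ u i)).prod * δ ^ n ∧
    ∃ (v : ℕ → ℕ) (k : ℕ),
      (∀ i < t, v i = u (t - 1 - ((i + k) % t))) ∧
      ∃ g : B3, g * rev (xuWord n t u) * g⁻¹ = xuWord n t v :=
  rev_xuWord_general rev hrev ha hb n t u
end

section
/- In B_3, for k ≥ 0 and u ≥ 1, the braid δ^{3k+2} a^u is conjugate to Δ^{2k+1} a^{1+u}, where δ = ba, Δ = aba. -/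
theorem δ_sq : δ ^ 2 = Δ * a := by
  rw [δ, pow_two, Δ, a_mul_b_mul_a, mul_assoc (b * a)]

theorem δ_cube : δ ^ 3 = Δ ^ 2 := by
  rw [pow_succ, δ_sq, δ, Δ, pow_two]
  simp only [mul_assoc]

theorem δ_pow_three_mul_add_two (k : ℕ) : δ ^ (3 * k + 2) = Δ ^ (2 * k + 1) * a := by
  rw [pow_add, pow_mul, δ_cube, δ_sq, ← pow_mul, ← mul_assoc, ← pow_succ]

-- The two braids are in fact equal, so the trivial conjugator suffices.
theorem delta_pow_a_conj_Delta_general (k u : ℕ) :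
    ∃ g : B3, g * (δ ^ (3 * k + 2) * a ^ u) * g⁻¹ = Δ ^ (2 * k + 1) * a ^ (1 + u) :=
  ⟨1, by
    rw [one_mul, inv_one, mul_one, δ_pow_three_mul_add_two, mul_assoc, ← pow_succ', add_comm 1 u]⟩

theorem delta_pow_a_conj_Delta (k u : ℕ) (hu : 1 ≤ u) :
    ∃ g : B3, g * (δ ^ (3 * k + 2) * a ^ u) * g⁻¹ = Δ ^ (2 * k + 1) * a ^ (1 + u) :=
  delta_pow_a_conj_Delta_general k u
end
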